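/- arXiv:2006.03639 — 3 statements merged into one kernel-verified Lean document; each statement's English description precedes it below -/
import Mathlib

section
/- Let N be a natural number, let f : ℝ → ℝ and Φ_0, Φ_1, ..., Φ_{N+1} : ℝ → ℝ be infinitely differentiable functions. Define Ψ(t) = −∑_{i=0}^{N} f^{(i)}(t) · ∑_{j=0}^{N−i} (−1)^j Φ_{i+j+1}^{(j)}(t) and Γ(t) = ∑_{j=0}^{N+1} (−1)^j Φ_j^{(j)}(t), where g^{(k)} denotes the k-th derivative of g. Then for all t ∈ ℝ: Ψ'(t) = f(t) Γ(t) − ∑_{i=0}^{N+1} f^{(i)}(t) Φ_i(t). -/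
/-!
For each `m`, the part of `Ψ` carrying `Φ_{m+1}` is minus the bilinear concomitant
`∑_{i+j=m} (-1)^j f⁽ⁱ⁾ Φ_{m+1}⁽ʲ⁾` of `f` and `Φ_{m+1}`, whose derivative telescopes
(Lagrange's identity) to `f⁽ᵐ⁺¹⁾ Φ_{m+1} + (-1)^m f Φ_{m+1}⁽ᵐ⁺¹⁾`.
Summing over `m` gives the identity, the `m = -1` term `f Φ₀ - f Φ₀` being zero.
-/

open Finset

theorem hasDerivAt_iteratedDeriv {u : ℝ → ℝ} {n : ℕ} (hu : ContDiff ℝ (n + 1) u) (t : ℝ) :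
    HasDerivAt (iteratedDeriv n u) (iteratedDeriv (n + 1) u t) t := by
  rw [iteratedDeriv_succ]
  exact (hu.differentiable_iteratedDeriv' n t).hasDerivAt

noncomputable def concomitant (n : ℕ) (u v : ℝ → ℝ) (s : ℝ) : ℝ :=
  ∑ i ∈ range (n + 1), (-1 : ℝ) ^ (n - i) * (iteratedDeriv i u s * iteratedDeriv (n - i) v s)

theorem hasDerivAt_concomitant {n : ℕ} {u v : ℝ → ℝ} (hu : ContDiff ℝ (n + 1) u)
    (hv : ContDiff ℝ (n + 1) v) (t : ℝ) :
    HasDerivAt (concomitant n u v)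
      (iteratedDeriv (n + 1) u t * v t + (-1 : ℝ) ^ n * u t * iteratedDeriv (n + 1) v t) t := by
  have hterm : ∀ i ∈ range (n + 1), HasDerivAt
      (fun s => (-1 : ℝ) ^ (n - i) * (iteratedDeriv i u s * iteratedDeriv (n - i) v s))
      ((-1 : ℝ) ^ (n - i) * (iteratedDeriv (i + 1) u t * iteratedDeriv (n - i) v t
        + iteratedDeriv i u t * iteratedDeriv (n - i + 1) v t)) t := by
    intro i hi
    have hi : i ≤ n := mem_range_succ_iff.mp hi
    have hui := hasDerivAt_iteratedDeriv (hu.of_le (by exact_mod_cast Nat.succ_le_succ hi)) t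
    have hvi := hasDerivAt_iteratedDeriv
      (hv.of_le (by exact_mod_cast Nat.succ_le_succ (Nat.sub_le n i))) t
    exact (hui.fun_mul hvi).const_mul _
  refine (HasDerivAt.fun_sum hterm).congr_deriv ?_
  let g : ℕ → ℝ := fun i => (-1 : ℝ) ^ (n + 1 - i) * iteratedDeriv i u t *
    iteratedDeriv (n + 1 - i) v t
  have htel : ∀ i ∈ range (n + 1), (-1 : ℝ) ^ (n - i) * (iteratedDeriv (i + 1) u t *
      iteratedDeriv (n - i) v t + iteratedDeriv i u t * iteratedDeriv (n - i + 1) v t)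
      = g (i + 1) - g i := by
    intro i hi
    have hi : i ≤ n := mem_range_succ_iff.mp hi
    simp only [g, Nat.succ_sub_succ, Nat.succ_sub hi, pow_succ]
    ring
  rw [sum_congr rfl htel, sum_range_sub]
  simp only [g, Nat.sub_self, Nat.sub_zero, pow_zero, pow_succ, iteratedDeriv_zero]
  ring

theorem sum_range_concomitant (N : ℕ) (u : ℝ → ℝ) (Φ : ℕ → ℝ → ℝ) (s : ℝ) :
    ∑ m ∈ range (N + 1), concomitant m u (Φ (m + 1)) s =
      ∑ i ∈ range (N + 1), iteratedDeriv i u s *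
        ∑ j ∈ range (N - i + 1), (-1 : ℝ) ^ j * iteratedDeriv j (Φ (i + j + 1)) s := by
  let F : ℕ → ℕ → ℝ := fun i j =>
    (-1 : ℝ) ^ j * (iteratedDeriv i u s * iteratedDeriv j (Φ (i + j + 1)) s)
  calc ∑ m ∈ range (N + 1), concomitant m u (Φ (m + 1)) s
      = ∑ m ∈ range (N + 1), ∑ k ∈ range (m + 1), F k (m - k) := by
        refine sum_congr rfl fun m _ => sum_congr rfl fun k hk => ?_
        simp only [F, Nat.add_sub_of_le (mem_range_succ_iff.mp hk)]
    _ = ∑ i ∈ range (N + 1), ∑ j ∈ range (N + 1 - i), F i j := sum_range_diag_flip _ F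
    _ = _ := by
        refine sum_congr rfl fun i hi => ?_
        rw [Nat.sub_add_comm (mem_range_succ_iff.mp hi), mul_sum]
        exact sum_congr rfl fun j _ => by ring

/-- Computational core of the main theorem: with
`Ψ(t) = -∑_{i=0}^{N} f⁽ⁱ⁾(t) ∑_{j=0}^{N-i} (-1)^j Φ_{i+j+1}⁽ʲ⁾(t)` and
`Γ(t) = ∑_{j=0}^{N+1} (-1)^j Φ_j⁽ʲ⁾(t)`, one has
`Ψ'(t) = f(t) Γ(t) - ∑_{i=0}^{N+1} f⁽ⁱ⁾(t) Φ_i(t)`. -/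
theorem flux_trivial_identity (N : ℕ) (f : ℝ → ℝ) (Φ : ℕ → ℝ → ℝ) (Ψ Γ : ℝ → ℝ)
    (hf : ContDiff ℝ (⊤ : ℕ∞) f)
    (hΦ : ∀ i ≤ N + 1, ContDiff ℝ (⊤ : ℕ∞) (Φ i))
    (hΨ : ∀ t, Ψ t = -∑ i ∈ Finset.range (N + 1), iteratedDeriv i f t *
        ∑ j ∈ Finset.range (N - i + 1), (-1 : ℝ) ^ j * iteratedDeriv j (Φ (i + j + 1)) t)
    (hΓ : ∀ t, Γ t = ∑ j ∈ Finset.range (N + 2), (-1 : ℝ) ^ j * iteratedDeriv j (Φ j) t) :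
    ∀ t : ℝ, deriv Ψ t =
      f t * Γ t - ∑ i ∈ Finset.range (N + 2), iteratedDeriv i f t * Φ i t := by
  intro t
  have hΨ_eq : Ψ = fun s => -∑ m ∈ range (N + 1), concomitant m f (Φ (m + 1)) s := by
    ext s
    rw [hΨ s, sum_range_concomitant]
  have hderiv : HasDerivAt Ψ (-∑ m ∈ range (N + 1), (iteratedDeriv (m + 1) f t * Φ (m + 1) t
      + (-1 : ℝ) ^ m * f t * iteratedDeriv (m + 1) (Φ (m + 1)) t)) t := by
    rw [hΨ_eq]
    refine (HasDerivAt.fun_sum fun m hm => hasDerivAt_concomitant ?_ ?_ t).neg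
    · exact hf.of_le (by exact_mod_cast le_top)
    · exact (hΦ (m + 1) (Nat.succ_le_of_lt (mem_range.mp hm))).of_le (by exact_mod_cast le_top)
  have hsign :
      f t * ∑ m ∈ range (N + 1), (-1 : ℝ) ^ (m + 1) * iteratedDeriv (m + 1) (Φ (m + 1)) t =
        -∑ m ∈ range (N + 1), (-1 : ℝ) ^ m * f t * iteratedDeriv (m + 1) (Φ (m + 1)) t := by
    rw [mul_sum, ← sum_neg_distrib]
    exact sum_congr rfl fun m _ => by ring
  rw [hderiv.deriv, hΓ t, sum_range_succ' (fun j => (-1 : ℝ) ^ j * iteratedDeriv j (Φ j) t),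
    sum_range_succ' (fun i => iteratedDeriv i f t * Φ i t), sum_add_distrib]
  simp only [pow_zero, iteratedDeriv_zero, one_mul]
  linear_combination -hsign
end

section
/- Let σ ∈ ℝ with σ² = 1 and let u : ℝ³ → ℝ be infinitely differentiable in (t, x, y). Define G(t,x,y) = ∂_x∂_t u + ∂_x( u ∂_x u + ∂_x³ u ) + σ ∂_y² u. Then for every (t,x,y) ∈ ℝ³: u = ∂_y( y u − (1/2) y² ∂_y u ) − ∂_x( (1/2) σ y² ( ∂_t u + u ∂_x u + ∂_x³ u ) ) + (1/2) σ y² G(t,x,y). -/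
/-!
The flux `y u - ½ y² u_y` has `y`-derivative `u - ½ y² u_yy`, and `½ σ y²` does not depend on `x`, so
`D_x(½ σ y² (u_t + u u_x + u_xxx)) = ½ σ y² (u_tx + (u u_x + u_xxx)_x) = ½ σ y² (G - σ u_yy)`.
The right-hand side therefore collapses to `u + ½ (σ² - 1) y² u_yy`, which is `u` because `σ² = 1`.
-/

/-- Partial derivative with respect to `t` of a function of `(t,x,y)`. -/
noncomputable def Dt (u : ℝ → ℝ → ℝ → ℝ) : ℝ → ℝ → ℝ → ℝ :=
  fun t x y => deriv (fun s => u s x y) t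

/-- Partial derivative with respect to `x`. -/
noncomputable def Dx (u : ℝ → ℝ → ℝ → ℝ) : ℝ → ℝ → ℝ → ℝ :=
  fun t x y => deriv (fun s => u t s y) x

/-- Partial derivative with respect to `y`. -/
noncomputable def Dy (u : ℝ → ℝ → ℝ → ℝ) : ℝ → ℝ → ℝ → ℝ :=
  fun t x y => deriv (fun s => u t x s) y

/-- Joint infinite differentiability of a function of `(t,x,y)`. -/
def Smooth3 (u : ℝ → ℝ → ℝ → ℝ) : Prop :=
  ContDiff ℝ (⊤ : ℕ∞) fun p : ℝ × ℝ × ℝ => u p.1 p.2.1 p.2.2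

abbrev uncurry3 (u : ℝ → ℝ → ℝ → ℝ) : ℝ × ℝ × ℝ → ℝ := fun p => u p.1 p.2.1 p.2.2

lemma Dx_const_mul (c : ℝ → ℝ → ℝ) (f : ℝ → ℝ → ℝ → ℝ) (t x y : ℝ) :
    Dx (fun t x y => c t y * f t x y) t x y = c t y * Dx f t x y :=
  deriv_const_mul_field _

lemma Dx_add {f g : ℝ → ℝ → ℝ → ℝ} {t x y : ℝ}
    (hf : DifferentiableAt ℝ (fun s => f t s y) x) (hg : DifferentiableAt ℝ (fun s => g t s y) x) :
    Dx (fun t x y => f t x y + g t x y) t x y = Dx f t x y + Dx g t x y :=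
  deriv_add hf hg

lemma Dy_y_mul_sub_half_y_sq_mul_Dy {f : ℝ → ℝ → ℝ → ℝ} {t x y : ℝ}
    (hf : DifferentiableAt ℝ (fun s => f t x s) y)
    (hDf : DifferentiableAt ℝ (fun s => Dy f t x s) y) :
    Dy (fun t x y => y * f t x y - 1 / 2 * y ^ 2 * Dy f t x y) t x y
      = f t x y - 1 / 2 * y ^ 2 * Dy (Dy f) t x y := by
  have h := ((hasDerivAt_id' y).fun_mul hf.hasDerivAt).fun_sub
    (((hasDerivAt_pow 2 y).const_mul (1 / 2 : ℝ)).fun_mul hDf.hasDerivAt)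
  rw [Dy, h.deriv, Dy, Dy]
  norm_num
  ring

namespace Smooth3

variable {u : ℝ → ℝ → ℝ → ℝ}

lemma add {v : ℝ → ℝ → ℝ → ℝ} (hu : Smooth3 u) (hv : Smooth3 v) :
    Smooth3 fun t x y => u t x y + v t x y :=
  ContDiff.add hu hv

lemma mul {v : ℝ → ℝ → ℝ → ℝ} (hu : Smooth3 u) (hv : Smooth3 v) :
    Smooth3 fun t x y => u t x y * v t x y :=
  ContDiff.mul hu hv

lemma contDiff_fderiv_apply (hu : Smooth3 u) (v : ℝ × ℝ × ℝ) :
    ContDiff ℝ (⊤ : ℕ∞) fun p => fderiv ℝ (uncurry3 u) p v :=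
  (hu.fderiv_right (by exact_mod_cast le_top)).clm_apply contDiff_const

lemma hasDerivAt_fderiv_t (hu : Smooth3 u) (t x y : ℝ) :
    HasDerivAt (fun s => u s x y) (fderiv ℝ (uncurry3 u) (t, x, y) (1, 0, 0)) t :=
  (hu.differentiable (by simp) _).hasFDerivAt.comp_hasDerivAt t
    ((hasDerivAt_id t).prodMk ((hasDerivAt_const t x).prodMk (hasDerivAt_const t y)))

lemma hasDerivAt_fderiv_x (hu : Smooth3 u) (t x y : ℝ) :
    HasDerivAt (fun s => u t s y) (fderiv ℝ (uncurry3 u) (t, x, y) (0, 1, 0)) x :=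
  (hu.differentiable (by simp) _).hasFDerivAt.comp_hasDerivAt x
    ((hasDerivAt_const x t).prodMk ((hasDerivAt_id x).prodMk (hasDerivAt_const x y)))

lemma hasDerivAt_fderiv_y (hu : Smooth3 u) (t x y : ℝ) :
    HasDerivAt (fun s => u t x s) (fderiv ℝ (uncurry3 u) (t, x, y) (0, 0, 1)) y :=
  (hu.differentiable (by simp) _).hasFDerivAt.comp_hasDerivAt y
    ((hasDerivAt_const y t).prodMk ((hasDerivAt_const y x).prodMk (hasDerivAt_id y)))

lemma dt (hu : Smooth3 u) : Smooth3 (Dt u) := by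
  have h : Dt u = fun t x y => fderiv ℝ (uncurry3 u) (t, x, y) (1, 0, 0) :=
    funext₃ fun t x y => (hu.hasDerivAt_fderiv_t t x y).deriv
  rw [Smooth3, h]
  exact hu.contDiff_fderiv_apply _

lemma dx (hu : Smooth3 u) : Smooth3 (Dx u) := by
  have h : Dx u = fun t x y => fderiv ℝ (uncurry3 u) (t, x, y) (0, 1, 0) :=
    funext₃ fun t x y => (hu.hasDerivAt_fderiv_x t x y).deriv
  rw [Smooth3, h]
  exact hu.contDiff_fderiv_apply _

lemma dy (hu : Smooth3 u) : Smooth3 (Dy u) := by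
  have h : Dy u = fun t x y => fderiv ℝ (uncurry3 u) (t, x, y) (0, 0, 1) :=
    funext₃ fun t x y => (hu.hasDerivAt_fderiv_y t x y).deriv
  rw [Smooth3, h]
  exact hu.contDiff_fderiv_apply _

lemma differentiableAt_x (hu : Smooth3 u) (t x y : ℝ) :
    DifferentiableAt ℝ (fun s => u t s y) x :=
  (hu.hasDerivAt_fderiv_x t x y).differentiableAt

lemma differentiableAt_y (hu : Smooth3 u) (t x y : ℝ) :
    DifferentiableAt ℝ (fun s => u t x s) y :=
  (hu.hasDerivAt_fderiv_y t x y).differentiableAt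

end Smooth3

/-- Divergence identity for the conserved density `u` of the KP equation
`G = u_{tx} + (u u_x + u_{xxx})_x + σ u_{yy}`:
`u = D_y(y u - (1/2) y² u_y) - D_x((1/2) σ y² (u_t + u u_x + u_{xxx})) + (1/2) σ y² G`. -/
theorem kp_mass_divergence_identity (σ : ℝ) (hσ : σ ^ 2 = 1)
    (u : ℝ → ℝ → ℝ → ℝ) (hu : Smooth3 u)
    (G : ℝ → ℝ → ℝ → ℝ)
    (hG : ∀ t x y, G t x y = Dx (Dt u) t x y
      + Dx (fun t x y => u t x y * Dx u t x y + Dx (Dx (Dx u)) t x y) t x y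
      + σ * Dy (Dy u) t x y) :
    ∀ t x y : ℝ,
      u t x y =
        Dy (fun t x y => y * u t x y - (1 / 2) * y ^ 2 * Dy u t x y) t x y
        - Dx (fun t x y => (1 / 2) * σ * y ^ 2 *
            (Dt u t x y + u t x y * Dx u t x y + Dx (Dx (Dx u)) t x y)) t x y
        + (1 / 2) * σ * y ^ 2 * G t x y := by
  intro t x y
  set P : ℝ → ℝ → ℝ → ℝ := fun t x y => u t x y * Dx u t x y + Dx (Dx (Dx u)) t x y
  have hP : Smooth3 P := (hu.mul hu.dx).add hu.dx.dx.dx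
  have hflux_x : Dx (fun t x y => (1 / 2) * σ * y ^ 2 *
      (Dt u t x y + u t x y * Dx u t x y + Dx (Dx (Dx u)) t x y)) t x y
      = (1 / 2) * σ * y ^ 2 * (Dx (Dt u) t x y + Dx P t x y) := by
    simp_rw [add_assoc]
    rw [Dx_const_mul (fun _ y => (1 / 2) * σ * y ^ 2) (fun t x y => Dt u t x y + P t x y),
      Dx_add (hu.dt.differentiableAt_x t x y) (hP.differentiableAt_x t x y)]
  rw [hflux_x, hG, Dy_y_mul_sub_half_y_sq_mul_Dy (hu.differentiableAt_y t x y)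
    (hu.dy.differentiableAt_y t x y)]
  linear_combination (-(1 / 2) * y ^ 2 * Dy (Dy u) t x y) * hσ
end

section
/- Let σ ∈ ℝ with σ² = 1 and let u : ℝ³ → ℝ be infinitely differentiable in (t, x, y). Define G(t,x,y) = ∂_x∂_t u + ∂_x( u ∂_x u + ∂_x³ u ) + σ ∂_y² u. Then for every (t,x,y) ∈ ℝ³: y u = ∂_y( (1/2) y² u − (1/6) y³ ∂_y u ) − ∂_x( (1/6) σ y³ ( ∂_t u + u ∂_x u + ∂_x³ u ) ) + (1/6) σ y³ G(t,x,y). -/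
/-!
Both fluxes are differentiated with the product rule. The `y`-flux contributes
`y u - (1/6) y³ u_yy`, while the `x`-flux contributes `(1/6) σ y³ (u_tx + (u u_x + u_xxx)_x)`,
which is `(1/6) σ y³ (G - σ u_yy)`. Because `σ² = 1`, the two `u_yy` terms cancel.
-/

namespace Smooth3
variable {u : ℝ → ℝ → ℝ → ℝ}

lemma comp {E : Type*} [NormedAddCommGroup E] [NormedSpace ℝ E] (hu : Smooth3 u)
    {g : E → ℝ × ℝ × ℝ} (hg : ContDiff ℝ (⊤ : ℕ∞) g) :
    ContDiff ℝ (⊤ : ℕ∞) fun e => u (g e).1 (g e).2.1 (g e).2.2 :=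
  ContDiff.comp hu hg

lemma hasDerivAt_Dx (hu : Smooth3 u) (t x y : ℝ) : HasDerivAt (fun s => u t s y)
    (Dx u t x y) x :=
  ((hu.comp (g := fun s => (t, s, y)) (by fun_prop)).differentiable (by simp) x).hasDerivAt

lemma hasDerivAt_Dy (hu : Smooth3 u) (t x y : ℝ) : HasDerivAt (fun s => u t x s)
    (Dy u t x y) y :=
  ((hu.comp (g := fun s => (t, x, s)) (by fun_prop)).differentiable (by simp) y).hasDerivAt

lemma Dy_ymoment_flux (hu : Smooth3 u) (t x y : ℝ) :
    Dy (fun t x y => (1 / 2) * y ^ 2 * u t x y - (1 / 6) * y ^ 3 * Dy u t x y) t x y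
      = y * u t x y - (1 / 6) * y ^ 3 * Dy (Dy u) t x y := by
  have h := (((hasDerivAt_pow 2 y).const_mul (1 / 2 : ℝ)).fun_mul
    (hu.hasDerivAt_Dy t x y)).fun_sub
    (((hasDerivAt_pow 3 y).const_mul (1 / 6 : ℝ)).fun_mul (hu.dy.hasDerivAt_Dy t x y))
  refine h.deriv.trans ?_
  push_cast
  ring

lemma Dx_kdv_flux (hu : Smooth3 u) (t x y : ℝ) :
    Dx (fun t x y => u t x y * Dx u t x y + Dx (Dx (Dx u)) t x y) t x y
      = Dx u t x y ^ 2 + u t x y * Dx (Dx u) t x y + Dx (Dx (Dx (Dx u))) t x y := by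
  have h := ((hu.hasDerivAt_Dx t x y).fun_mul (hu.dx.hasDerivAt_Dx t x y)).fun_add
    (hu.dx.dx.dx.hasDerivAt_Dx t x y)
  exact h.deriv.trans (by ring)

lemma Dx_kp_flux (hu : Smooth3 u) (c : ℝ) (t x y : ℝ) :
    Dx (fun t x y => c * y ^ 3 *
        (Dt u t x y + u t x y * Dx u t x y + Dx (Dx (Dx u)) t x y)) t x y
      = c * y ^ 3 * (Dx (Dt u) t x y
          + Dx (fun t x y => u t x y * Dx u t x y + Dx (Dx (Dx u)) t x y) t x y) := by
  have h := (((hu.dt.hasDerivAt_Dx t x y).fun_add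
    ((hu.hasDerivAt_Dx t x y).fun_mul (hu.dx.hasDerivAt_Dx t x y))).fun_add
    (hu.dx.dx.dx.hasDerivAt_Dx t x y)).const_mul (c * y ^ 3)
  refine h.deriv.trans ?_
  rw [hu.Dx_kdv_flux]
  ring

end Smooth3

/-- Divergence identity for the conserved density `y u` of the KP equation
`G = u_{tx} + (u u_x + u_{xxx})_x + σ u_{yy}`:
`y u = D_y((1/2) y² u - (1/6) y³ u_y) - D_x((1/6) σ y³ (u_t + u u_x + u_{xxx})) + (1/6) σ y³ G`. -/
theorem kp_ymoment_divergence_identity (σ : ℝ) (hσ : σ ^ 2 = 1)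
    (u : ℝ → ℝ → ℝ → ℝ) (hu : Smooth3 u)
    (G : ℝ → ℝ → ℝ → ℝ)
    (hG : ∀ t x y, G t x y = Dx (Dt u) t x y
      + Dx (fun t x y => u t x y * Dx u t x y + Dx (Dx (Dx u)) t x y) t x y
      + σ * Dy (Dy u) t x y) :
    ∀ t x y : ℝ,
      y * u t x y =
        Dy (fun t x y => (1 / 2) * y ^ 2 * u t x y - (1 / 6) * y ^ 3 * Dy u t x y) t x y
        - Dx (fun t x y => (1 / 6) * σ * y ^ 3 *
            (Dt u t x y + u t x y * Dx u t x y + Dx (Dx (Dx u)) t x y)) t x y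
        + (1 / 6) * σ * y ^ 3 * G t x y := by
  intro t x y
  rw [hu.Dy_ymoment_flux, hu.Dx_kp_flux, hG]
  linear_combination (-(1 / 6) * y ^ 3 * Dy (Dy u) t x y) * hσ
end
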